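/- Let V be a vector space over ℚ and let g : ℕ → V satisfy g(0) = 0 and have finite support (g(m) = 0 for all but finitely many m). Define f : ℕ → V by f(n) = Σ_{k ≥ 1} (1/k) · g(n·k) (a finite sum). Then g(1) = Σ_{k ≥ 1} (μ(k)/k) · f(k), where μ denotes the number-theoretic Möbius function. -/
import Mathlib


/-- Möbius inversion for finitely supported sequences in a `ℚ`-vector space:
if `f n = ∑_{k ≥ 1} (1/k) • g (n * k)` then `g 1 = ∑_{k ≥ 1} (μ(k)/k) • f k`. -/
theorem moebius_inversion_of_finite_support
    {V : Type*} [AddCommGroup V] [Module ℚ V]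
    (g : ℕ → V) (hg0 : g 0 = 0) (hfin : (Function.support g).Finite)
    (f : ℕ → V)
    (hf : ∀ n, f n = ∑ᶠ k ∈ Set.Ici (1 : ℕ), ((k : ℚ))⁻¹ • g (n * k)) :
    g 1 = ∑ᶠ k ∈ Set.Ici (1 : ℕ),
      (((ArithmeticFunction.moebius k : ℤ) : ℚ) / (k : ℚ)) • f k := by
  classical
  open Finset ArithmeticFunction in
  set t := hfin.toFinset with ht
  set N := max (t.sup _root_.id) 1 with hNdef
  have hN1 : 1 ≤ N := le_max_right _ _
  have hgz : ∀ m, N < m → g m = 0 := by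
    intro m hm
    by_contra h
    have h1 : m ∈ t := hfin.mem_toFinset.mpr h
    have h2 : m ≤ t.sup _root_.id := Finset.le_sup (f := _root_.id) h1
    omega
  have hfN : ∀ n, 1 ≤ n → f n = ∑ k ∈ Finset.Icc 1 N, (k : ℚ)⁻¹ • g (n * k) := by
    intro n hn
    rw [hf n]
    apply finsum_mem_eq_sum_of_subset
    · rintro k ⟨hk1, hk2⟩
      simp only [Function.mem_support] at hk2
      have hgnk : g (n * k) ≠ 0 := fun h => hk2 (by rw [h, smul_zero])
      have hle : n * k ≤ N := by
        by_contra h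
        exact hgnk (hgz _ (by omega))
      have hk1' : (1 : ℕ) ≤ k := hk1
      have : k ≤ n * k := by nlinarith
      simp only [Finset.coe_Icc, Set.mem_Icc]
      exact ⟨hk1', by omega⟩
    · intro k hk
      simp only [Finset.coe_Icc, Set.mem_Icc] at hk
      exact hk.1
  have hfzero : ∀ n, N < n → f n = 0 := by
    intro n hn
    rw [hfN n (by omega)]
    apply Finset.sum_eq_zero
    intro k hk
    rw [Finset.mem_Icc] at hk
    have : n ≤ n * k := by nlinarith [hk.1]
    rw [hgz (n * k) (by omega), smul_zero]
  have hout : ∑ᶠ k ∈ Set.Ici (1 : ℕ),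
      (((ArithmeticFunction.moebius k : ℤ) : ℚ) / (k : ℚ)) • f k
      = ∑ k ∈ Finset.Icc 1 N,
        (((ArithmeticFunction.moebius k : ℤ) : ℚ) / (k : ℚ)) • f k := by
    apply finsum_mem_eq_sum_of_subset
    · rintro k ⟨hk1, hk2⟩
      simp only [Function.mem_support] at hk2
      have hfk : f k ≠ 0 := fun h => hk2 (by rw [h, smul_zero])
      have hk1' : (1 : ℕ) ≤ k := hk1
      have hle : k ≤ N := by
        by_contra h
        exact hfk (hfzero _ (by omega))
      simp only [Finset.coe_Icc, Set.mem_Icc]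
      exact ⟨hk1', hle⟩
    · intro k hk
      simp only [Finset.coe_Icc, Set.mem_Icc] at hk
      exact hk.1
  rw [hout]
  have step1 : ∑ k ∈ Finset.Icc 1 N,
        (((ArithmeticFunction.moebius k : ℤ) : ℚ) / (k : ℚ)) • f k
      = ∑ p ∈ Finset.Icc 1 N ×ˢ Finset.Icc 1 N,
        (((ArithmeticFunction.moebius p.1 : ℤ) : ℚ) / ((p.1 : ℚ) * (p.2 : ℚ)))
          • g (p.1 * p.2) := by
    rw [Finset.sum_product]
    apply Finset.sum_congr rfl
    intro k hk
    rw [hfN k (Finset.mem_Icc.mp hk).1, Finset.smul_sum]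
    apply Finset.sum_congr rfl
    intro j hj
    rw [smul_smul]
    congr 1
    rw [div_eq_mul_inv, div_eq_mul_inv, mul_inv, mul_assoc]
  rw [step1]
  set B := (Finset.Icc 1 N).biUnion (fun m => m.divisorsAntidiagonal) with hB
  have hBsub : B ⊆ Finset.Icc 1 N ×ˢ Finset.Icc 1 N := by
    intro p hp
    simp only [hB, Finset.mem_biUnion] at hp
    obtain ⟨m, hm, hpm⟩ := hp
    rw [Nat.mem_divisorsAntidiagonal] at hpm
    rw [Finset.mem_Icc] at hm
    obtain ⟨hprod, hne⟩ := hpm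
    rw [Finset.mem_product, Finset.mem_Icc, Finset.mem_Icc]
    have h1 : p.1 ≤ m := Nat.le_of_dvd (Nat.pos_of_ne_zero hne) ⟨p.2, hprod.symm⟩
    have h2 : p.2 ≤ m := Nat.le_of_dvd (Nat.pos_of_ne_zero hne) ⟨p.1, by rw [← hprod]; ring⟩
    have h3 : p.1 ≠ 0 := fun h => hne (by rw [← hprod, h, zero_mul])
    have h4 : p.2 ≠ 0 := fun h => hne (by rw [← hprod, h, mul_zero])
    omega
  have step2 : ∑ p ∈ Finset.Icc 1 N ×ˢ Finset.Icc 1 N,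
        (((ArithmeticFunction.moebius p.1 : ℤ) : ℚ) / ((p.1 : ℚ) * (p.2 : ℚ)))
          • g (p.1 * p.2)
      = ∑ p ∈ B,
        (((ArithmeticFunction.moebius p.1 : ℤ) : ℚ) / ((p.1 : ℚ) * (p.2 : ℚ)))
          • g (p.1 * p.2) := by
    symm
    apply Finset.sum_subset hBsub
    intro p hp hpB
    rw [Finset.mem_product, Finset.mem_Icc, Finset.mem_Icc] at hp
    by_cases hle : p.1 * p.2 ≤ N
    · exfalso
      apply hpB
      simp only [hB, Finset.mem_biUnion]
      refine ⟨p.1 * p.2, Finset.mem_Icc.mpr ⟨by nlinarith [hp.1.1, hp.2.1], hle⟩, ?_⟩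
      rw [Nat.mem_divisorsAntidiagonal]
      exact ⟨rfl, Nat.mul_ne_zero (by omega) (by omega)⟩
    · rw [hgz (p.1 * p.2) (by omega), smul_zero]
  rw [step2]
  have hdisj : (↑(Finset.Icc 1 N) : Set ℕ).PairwiseDisjoint
      (fun m => m.divisorsAntidiagonal) := by
    intro m hm n hn hmn
    simp only [Function.onFun]
    rw [Finset.disjoint_left]
    intro p hpm hpn
    rw [Nat.mem_divisorsAntidiagonal] at hpm hpn
    exact hmn (hpm.1.symm ▸ hpn.1)
  rw [hB, Finset.sum_biUnion hdisj]
  have step4 : ∀ m ∈ Finset.Icc 1 N,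
      ∑ p ∈ m.divisorsAntidiagonal,
        (((ArithmeticFunction.moebius p.1 : ℤ) : ℚ) / ((p.1 : ℚ) * (p.2 : ℚ)))
          • g (p.1 * p.2)
      = (((if m = 1 then (1 : ℤ) else 0) : ℚ) / (m : ℚ)) • g m := by
    intro m hm
    have key : ∑ p ∈ m.divisorsAntidiagonal,
        (((ArithmeticFunction.moebius p.1 : ℤ) : ℚ) / ((p.1 : ℚ) * (p.2 : ℚ)))
          • g (p.1 * p.2)
        = ∑ p ∈ m.divisorsAntidiagonal,
          (((ArithmeticFunction.moebius p.1 : ℤ) : ℚ) / (m : ℚ)) • g m := by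
      apply Finset.sum_congr rfl
      intro p hp
      rw [Nat.mem_divisorsAntidiagonal] at hp
      rw [← hp.1]
      push_cast
      rfl
    rw [key]
    have : ∑ p ∈ m.divisorsAntidiagonal,
        (((ArithmeticFunction.moebius p.1 : ℤ) : ℚ) / (m : ℚ)) • g m
        = ((((∑ p ∈ m.divisorsAntidiagonal, ArithmeticFunction.moebius p.1) : ℤ) : ℚ)
            / (m : ℚ)) • g m := by
      rw [← Finset.sum_smul, ← Finset.sum_div]
      push_cast
      rfl
    have h2 : ∑ p ∈ m.divisorsAntidiagonal, ArithmeticFunction.moebius p.1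
        = if m = 1 then 1 else 0 := by
      rw [Nat.sum_divisorsAntidiagonal (fun d _ => ArithmeticFunction.moebius d),
        ← ArithmeticFunction.coe_mul_zeta_apply,
        ArithmeticFunction.moebius_mul_coe_zeta, ArithmeticFunction.one_apply]
    rw [this, h2]
    split_ifs <;> simp
  rw [Finset.sum_congr rfl step4]
  rw [Finset.sum_eq_single_of_mem 1 (Finset.mem_Icc.mpr ⟨le_refl 1, hN1⟩)]
  · simp
  · intro m hm hne
    simp [hne]
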